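/- Let k ≥ 1 and let a_1 < a_2 < … < a_k be positive integers, A = {a_1,…,a_k}. In ℤ[[x,y,r,ℓ,d]] set D_i = 1 − x^{2a_i}·y^2·(ℓ^2 − d·r) for 1 ≤ i ≤ k. Then P_A(x;y;r,ℓ,d) · ( ∏_{i=1}^k D_i − d·r·∑_{i=1}^k x^{2a_i}·y^2 · ∏_{j≠i} D_j ) = ∏_{i=1}^k D_i + ∑_{i=1}^k ( x^{a_i}·y + x^{2a_i}·y^2·(ℓ − d·r) ) · ∏_{j≠i} D_j. (This is the denominator-cleared form of P_A = [1 + ∑_i (x^{a_i}y + x^{2a_i}y^2(ℓ−dr))/D_i] / [1 − ∑_i x^{2a_i}y^2 d r / D_i]; the factor multiplying P_A has constant term 1 and hence is invertible.) -/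

import Mathlib

open scoped Classical

/-- Number of rises of a list (adjacent pairs with strict increase). -/
def risesL (l : List ℕ) : ℕ := (l.zip l.tail).countP (fun p => decide (p.1 < p.2))

/-- Number of levels of a list (adjacent equal pairs). -/
def levelsL (l : List ℕ) : ℕ := (l.zip l.tail).countP (fun p => decide (p.1 = p.2))

/-- Number of drops of a list (adjacent pairs with strict decrease). -/
def dropsL (l : List ℕ) : ℕ := (l.zip l.tail).countP (fun p => decide (p.2 < p.1))

/-- The generating function `P_A(x;y;r,ℓ,d)` in `ℤ[[x,y,r,ℓ,d]]`, with
`x = X 0`, `y = X 1`, `r = X 2`, `ℓ = X 3`, `d = X 4`: the coefficient of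
`x^n y^p r^s ℓ^t d^u` is the number of palindromic compositions of `n` with all
parts in `A = {a 1, …, a k}`, with `p` parts, `s` rises, `t` levels, `u` drops. -/
noncomputable def PA {k : ℕ} (a : Fin k → ℕ) : MvPowerSeries (Fin 5) ℤ :=
  fun m => ((Finset.univ.filter (fun c : Composition (m 0) =>
      (∀ p ∈ c.blocks, ∃ i, a i = p) ∧ c.blocks.reverse = c.blocks ∧ c.length = m 1 ∧
      risesL c.blocks = m 2 ∧ levelsL c.blocks = m 3 ∧ dropsL c.blocks = m 4)).card : ℤ)

/-- `D i = 1 − x^{2a_i} y² (ℓ² − d·r)`. -/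
noncomputable def DD {k : ℕ} (a : Fin k → ℕ) (i : Fin k) : MvPowerSeries (Fin 5) ℤ :=
  1 - (MvPowerSeries.X 0) ^ (2 * a i) * (MvPowerSeries.X 1) ^ 2
      * ((MvPowerSeries.X 3) ^ 2 - MvPowerSeries.X 4 * MvPowerSeries.X 2)

/-- generic adjacent-pair count -/
def cnt (p : ℕ → ℕ → Bool) (l : List ℕ) : ℕ := (l.zip l.tail).countP (fun q => p q.1 q.2)

lemma risesL_eq (l : List ℕ) : risesL l = cnt (fun x y => decide (x < y)) l := rfl
lemma levelsL_eq (l : List ℕ) : levelsL l = cnt (fun x y => decide (x = y)) l := rfl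
lemma dropsL_eq (l : List ℕ) : dropsL l = cnt (fun x y => decide (y < x)) l := rfl

lemma cnt_nil (p) : cnt p [] = 0 := rfl
lemma cnt_single (p) (x : ℕ) : cnt p [x] = 0 := rfl

lemma cnt_cons (p) (x y : ℕ) (t : List ℕ) :
    cnt p (x :: y :: t) = (if p x y then 1 else 0) + cnt p (y :: t) := by
  simp [cnt, List.countP_cons]
  cases p x y <;> simp [Nat.add_comm]

lemma cnt_concat (p) (t : List ℕ) (ht : t ≠ []) (x : ℕ) :
    cnt p (t ++ [x]) = cnt p t + (if p (t.getLast ht) x then 1 else 0) := by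
  induction t with
  | nil => simp at ht
  | cons y t ih =>
    cases t with
    | nil => simp [cnt_single, cnt_cons, cnt_nil]; congr
    | cons z t =>
      have h' : (z :: t) ≠ [] := by simp
      rw [List.cons_append, cnt_cons, List.cons_append] at *
      rw [cnt_cons, ih h']
      rw [List.getLast_cons h']
      ring

lemma cnt_wrap (p) (b h : ℕ) (t : List ℕ) (hpal : (h::t).reverse = h::t) :
    cnt p (b :: ((h::t) ++ [b])) =
      cnt p (h::t) + ((if p b h then 1 else 0) + (if p h b then 1 else 0)) := by
  have hlast : (h::t).getLast (by simp) = h := by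
    have := congrArg List.head? hpal
    rw [List.head?_reverse] at this
    have h2 : (h::t).getLast? = some h := by simpa using this
    rw [List.getLast?_eq_getLast (by simp)] at h2
    exact Option.some_injective _ h2
  have e1 : b :: ((h::t) ++ [b]) = b :: h :: (t ++ [b]) := by simp
  have e2 : h :: (t ++ [b]) = (h :: t) ++ [b] := by simp
  rw [e1, cnt_cons, e2, cnt_concat p (h::t) (by simp) b, hlast]
  ring

lemma reverse_wrap (b : ℕ) (τ : List ℕ) : (b :: (τ ++ [b])).reverse = b :: (τ.reverse ++ [b]) := by
  simp

lemma wrap_palin_iff (b : ℕ) (τ : List ℕ) :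
    (b :: (τ ++ [b])).reverse = b :: (τ ++ [b]) ↔ τ.reverse = τ := by
  rw [reverse_wrap]
  constructor
  · intro h
    have h2 : τ.reverse ++ [b] = τ ++ [b] := by simpa using h
    exact List.append_cancel_right h2
  · intro h; rw [h]

lemma palin_decomp (l : List ℕ) (b : ℕ) (hpal : l.reverse = l) (hh : l.head? = some b)
    (hl : 2 ≤ l.length) : ∃ τ, l = b :: (τ ++ [b]) ∧ τ.reverse = τ := by
  obtain ⟨x, t, rfl⟩ : ∃ x t, l = x :: t := by
    cases l with
    | nil => simp at hh
    | cons x t => exact ⟨x, t, rfl⟩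
  have hxb : x = b := by have := hh; simp at this; omega
  subst hxb
  have ht : t ≠ [] := by intro h; subst h; simp at hl
  obtain ⟨τ, y, rfl⟩ : ∃ τ y, t = τ ++ [y] :=
    ⟨t.dropLast, t.getLast ht, (List.dropLast_append_getLast ht).symm⟩
  have hy : y = x := by
    have h1 := congrArg List.head? hpal
    rw [List.head?_reverse] at h1
    have h2 : (x :: (τ ++ [y])).getLast? = some y := by
      rw [List.getLast?_eq_getLast (by simp)]
      simp [List.getLast_cons, List.getLast_append]
    rw [h2] at h1
    have h3 : (x :: (τ ++ [y])).head? = some x := rfl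
    rw [h3] at h1
    simp at h1
    omega
  subst hy
  exact ⟨τ, rfl, (wrap_palin_iff y τ).mp hpal⟩

noncomputable def PP {k : ℕ} (a : Fin k → ℕ) (i : Fin k) : MvPowerSeries (Fin 5) ℤ :=
  fun m => ((Finset.univ.filter (fun c : Composition (m 0) =>
      ((∀ p ∈ c.blocks, ∃ j, a j = p) ∧ c.blocks.reverse = c.blocks ∧ c.length = m 1 ∧
      risesL c.blocks = m 2 ∧ levelsL c.blocks = m 3 ∧ dropsL c.blocks = m 4) ∧
      c.blocks.head? = some (a i))).card : ℤ)

lemma comp_ext {n : ℕ} {c c' : Composition n} (h : c.blocks = c'.blocks) : c = c' := by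
  cases c; cases c'; simpa using h

lemma comp_zero_blocks (c : Composition 0) : c.blocks = [] := by
  have hs := c.blocks_sum
  have hp := fun {i} => c.blocks_pos (i := i)
  cases h : c.blocks with
  | nil => rfl
  | cons x t =>
    rw [h] at hs
    have : 0 < x := hp (h ▸ (List.mem_cons_self (a := x) (l := t)))
    simp [List.sum_cons] at hs
    omega

lemma comp_zero_blocks' {n : ℕ} (hn : n = 0) (c : Composition n) : c.blocks = [] := by
  subst hn; exact comp_zero_blocks c

lemma comp_blocks_ne_nil {n : ℕ} (hn : n ≠ 0) (c : Composition n) : c.blocks ≠ [] := by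
  intro h
  have hs := c.blocks_sum
  rw [h] at hs
  simp at hs
  exact hn hs.symm

/-- generic head-splitting lemma -/
lemma card_head_sum {k n : ℕ} (a : Fin k → ℕ) (hinj : Function.Injective a)
    (Q : Composition n → Prop) (J : Finset (Fin k)) :
    (Finset.univ.filter (fun c : Composition n =>
        Q c ∧ ∃ j ∈ J, c.blocks.head? = some (a j))).card
      = ∑ j ∈ J, (Finset.univ.filter (fun c : Composition n =>
          Q c ∧ c.blocks.head? = some (a j))).card := by
  rw [← Finset.card_biUnion]
  · congr 1
    ext c
    simp only [Finset.mem_biUnion, Finset.mem_filter, Finset.mem_univ, true_and]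
    tauto
  · intro x _ y _ hxy
    simp only [Finset.disjoint_left, Finset.mem_filter, Finset.mem_univ, true_and]
    rintro c ⟨-, hcx⟩ ⟨-, hcy⟩
    apply hxy
    apply hinj
    rw [hcx] at hcy
    exact Option.some_injective _ hcy

lemma step1 {k : ℕ} (a : Fin k → ℕ) (hinj : Function.Injective a) :
    PA a = 1 + ∑ i, PP a i := by
  apply MvPowerSeries.ext
  intro m
  rw [map_add, map_sum, MvPowerSeries.coeff_one]
  have hPA : MvPowerSeries.coeff m (PA a) = (PA a) m := rfl
  have hPP : ∀ i, MvPowerSeries.coeff m (PP a i) = (PP a i) m := fun _ => rfl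
  rw [hPA]
  simp only [hPP]
  by_cases hm : m = 0
  · subst hm
    have h1 : (PA a) 0 = 1 := by
      show ((Finset.univ.filter _).card : ℤ) = 1
      rw [Finset.filter_true_of_mem, Finset.card_univ]
      · rw [show Fintype.card (Composition ((0 : Fin 5 →₀ ℕ) 0)) = 1 from ?_]
        · simp
        · rw [Fintype.card_eq_one_iff]
          refine ⟨⟨[], by simp, by simp⟩, fun c => comp_ext ?_⟩
          have : ((0 : Fin 5 →₀ ℕ) 0) = 0 := rfl
          exact (comp_zero_blocks (this ▸ c)).trans rfl
      · intro c _
        have hb : c.blocks = [] := comp_zero_blocks c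
        simp [hb, Composition.length, risesL, levelsL, dropsL]
    have h2 : ∀ i, (PP a i) 0 = 0 := by
      intro i
      show ((Finset.univ.filter _).card : ℤ) = 0
      rw [Finset.filter_false_of_mem, Finset.card_empty]
      · simp
      · intro c _
        have hb : c.blocks = [] := comp_zero_blocks c
        simp [hb]
    rw [h1]
    simp [h2]
  · rw [if_neg hm]
    by_cases h0 : m 0 = 0
    · -- everything is zero
      have h1 : (PA a) m = 0 := by
        show ((Finset.univ.filter _).card : ℤ) = 0
        rw [Finset.filter_false_of_mem, Finset.card_empty]
        · simp
        · intro c _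
          have hb : c.blocks = [] := comp_zero_blocks' h0 c
          rintro ⟨-, -, hlen, hr, hl, hd⟩
          apply hm
          have hall : ∀ j : Fin 5, m j = 0 := by
            intro j
            fin_cases j
            · exact h0
            · simpa [hb, Composition.length] using hlen.symm
            · simpa [hb, risesL] using hr.symm
            · simpa [hb, levelsL] using hl.symm
            · simpa [hb, dropsL] using hd.symm
          exact Finsupp.ext hall
      have h2 : ∀ i, (PP a i) m = 0 := by
        intro i
        show ((Finset.univ.filter _).card : ℤ) = 0
        rw [Finset.filter_false_of_mem, Finset.card_empty]
        · simp
        · intro c _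
          have hb : c.blocks = [] := comp_zero_blocks' h0 c
          rintro ⟨-, hh⟩
          rw [hb] at hh
          simp at hh
      rw [h1]; simp [h2]
    · -- m 0 ≠ 0 : split by head
      rw [zero_add]
      have key := card_head_sum a hinj (n := m 0)
        (fun c => (∀ p ∈ c.blocks, ∃ i, a i = p) ∧ c.blocks.reverse = c.blocks ∧
          c.length = m 1 ∧ risesL c.blocks = m 2 ∧ levelsL c.blocks = m 3 ∧
          dropsL c.blocks = m 4) Finset.univ
      have hsets : (Finset.univ.filter (fun c : Composition (m 0) =>
            (∀ p ∈ c.blocks, ∃ i, a i = p) ∧ c.blocks.reverse = c.blocks ∧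
            c.length = m 1 ∧ risesL c.blocks = m 2 ∧ levelsL c.blocks = m 3 ∧
            dropsL c.blocks = m 4))
          = (Finset.univ.filter (fun c : Composition (m 0) =>
            ((∀ p ∈ c.blocks, ∃ i, a i = p) ∧ c.blocks.reverse = c.blocks ∧
            c.length = m 1 ∧ risesL c.blocks = m 2 ∧ levelsL c.blocks = m 3 ∧
            dropsL c.blocks = m 4) ∧ ∃ j ∈ Finset.univ, c.blocks.head? = some (a j))) := by
        ext c
        simp only [Finset.mem_filter, Finset.mem_univ, true_and]
        constructor
        · rintro ⟨hA, hrest⟩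
          refine ⟨⟨hA, hrest⟩, ?_⟩
          have hb : c.blocks ≠ [] := comp_blocks_ne_nil h0 c
          obtain ⟨x, t, hxt⟩ := List.exists_cons_of_ne_nil hb
          have hx : x ∈ c.blocks := hxt ▸ (List.mem_cons_self (a := x) (l := t))
          obtain ⟨j, hj⟩ := hA x hx
          exact ⟨j, by rw [hxt]; simp [hj]⟩
        · rintro ⟨⟨hA, hrest⟩, -⟩
          exact ⟨hA, hrest⟩
      have heq : PA a m = ((Finset.univ.filter (fun c : Composition (m 0) =>
            ((∀ p ∈ c.blocks, ∃ i, a i = p) ∧ c.blocks.reverse = c.blocks ∧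
            c.length = m 1 ∧ risesL c.blocks = m 2 ∧ levelsL c.blocks = m 3 ∧
            dropsL c.blocks = m 4) ∧ ∃ j ∈ Finset.univ, c.blocks.head? = some (a j))).card : ℤ) :=
        congrArg (fun n : ℕ => (n : ℤ)) (congrArg Finset.card hsets)
      have key3 : PA a m = ∑ j : Fin k, ((Finset.univ.filter (fun c : Composition (m 0) =>
            ((∀ p ∈ c.blocks, ∃ i, a i = p) ∧ c.blocks.reverse = c.blocks ∧
            c.length = m 1 ∧ risesL c.blocks = m 2 ∧ levelsL c.blocks = m 3 ∧
            dropsL c.blocks = m 4) ∧ c.blocks.head? = some (a j))).card : ℤ) := by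
        rw [heq]
        have keyZ := congrArg (Nat.cast : ℕ → ℤ) key
        push_cast at keyZ
        convert keyZ
        rfl
      exact key3.trans (Finset.sum_congr rfl fun j _ => rfl)


noncomputable def mS (v : ℕ) : Fin 5 →₀ ℕ := Finsupp.single 0 v + Finsupp.single 1 1
noncomputable def mL (v : ℕ) : Fin 5 →₀ ℕ := Finsupp.single 0 (2*v) + Finsupp.single 1 2 + Finsupp.single 3 1
noncomputable def mLL (v : ℕ) : Fin 5 →₀ ℕ := Finsupp.single 0 (2*v) + Finsupp.single 1 2 + Finsupp.single 3 2
noncomputable def mDR (v : ℕ) : Fin 5 →₀ ℕ :=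
  Finsupp.single 0 (2*v) + Finsupp.single 1 2 + Finsupp.single 2 1 + Finsupp.single 4 1

lemma mS_apply (v : ℕ) : mS v 0 = v ∧ mS v 1 = 1 ∧ mS v 2 = 0 ∧ mS v 3 = 0 ∧ mS v 4 = 0 := by
  refine ⟨?_, ?_, ?_, ?_, ?_⟩ <;> simp [mS, Finsupp.single_apply]

lemma mL_apply (v : ℕ) : mL v 0 = 2*v ∧ mL v 1 = 2 ∧ mL v 2 = 0 ∧ mL v 3 = 1 ∧ mL v 4 = 0 := by
  refine ⟨?_, ?_, ?_, ?_, ?_⟩ <;> simp [mL, Finsupp.single_apply]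

lemma mLL_apply (v : ℕ) : mLL v 0 = 2*v ∧ mLL v 1 = 2 ∧ mLL v 2 = 0 ∧ mLL v 3 = 2 ∧ mLL v 4 = 0 := by
  refine ⟨?_, ?_, ?_, ?_, ?_⟩ <;> simp [mLL, Finsupp.single_apply]

lemma mDR_apply (v : ℕ) :
    mDR v 0 = 2*v ∧ mDR v 1 = 2 ∧ mDR v 2 = 1 ∧ mDR v 3 = 0 ∧ mDR v 4 = 1 := by
  refine ⟨?_, ?_, ?_, ?_, ?_⟩ <;> simp [mDR, Finsupp.single_apply]

lemma eq_iff_coords (m m' : Fin 5 →₀ ℕ) :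
    m = m' ↔ (m 0 = m' 0 ∧ m 1 = m' 1 ∧ m 2 = m' 2 ∧ m 3 = m' 3 ∧ m 4 = m' 4) := by
  constructor
  · rintro rfl; exact ⟨rfl, rfl, rfl, rfl, rfl⟩
  · rintro ⟨h0, h1, h2, h3, h4⟩
    apply Finsupp.ext
    intro j
    fin_cases j <;> assumption

lemma le_iff_coords (m m' : Fin 5 →₀ ℕ) :
    m ≤ m' ↔ (m 0 ≤ m' 0 ∧ m 1 ≤ m' 1 ∧ m 2 ≤ m' 2 ∧ m 3 ≤ m' 3 ∧ m 4 ≤ m' 4) := by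
  rw [Finsupp.le_def]
  constructor
  · intro h; exact ⟨h 0, h 1, h 2, h 3, h 4⟩
  · rintro ⟨h0, h1, h2, h3, h4⟩ j
    fin_cases j <;> assumption

lemma sub_apply5 (m m' : Fin 5 →₀ ℕ) (j : Fin 5) : (m - m') j = m j - m' j :=
  Finsupp.tsub_apply m m' j
noncomputable def SF {k : ℕ} (a : Fin k → ℕ) (j : Fin k) (m : Fin 5 →₀ ℕ) :
    Finset (Composition (m 0)) :=
  Finset.univ.filter (fun c => ((∀ p ∈ c.blocks, ∃ j', a j' = p) ∧ c.blocks.reverse = c.blocks ∧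
      c.length = m 1 ∧ risesL c.blocks = m 2 ∧ levelsL c.blocks = m 3 ∧ dropsL c.blocks = m 4) ∧
      c.blocks.head? = some (a j))

lemma PP_apply {k : ℕ} (a : Fin k → ℕ) (j : Fin k) (m : Fin 5 →₀ ℕ) :
    PP a j m = ((SF a j m).card : ℤ) := rfl

lemma mem_SF {k : ℕ} {a : Fin k → ℕ} {j : Fin k} {m : Fin 5 →₀ ℕ} {c : Composition (m 0)} :
    c ∈ SF a j m ↔ ((∀ p ∈ c.blocks, ∃ j', a j' = p) ∧ c.blocks.reverse = c.blocks ∧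
      c.length = m 1 ∧ risesL c.blocks = m 2 ∧ levelsL c.blocks = m 3 ∧ dropsL c.blocks = m 4) ∧
      c.blocks.head? = some (a j) := by
  simp only [SF, Finset.mem_filter, Finset.mem_univ, true_and]

lemma risesL_wrap (b h : ℕ) (t : List ℕ) (hpal : (h::t).reverse = h::t) :
    risesL (b :: ((h::t) ++ [b])) =
      risesL (h::t) + ((if b < h then 1 else 0) + (if h < b then 1 else 0)) := by
  rw [risesL_eq, risesL_eq, cnt_wrap _ _ _ _ hpal]
  simp

lemma levelsL_wrap (b h : ℕ) (t : List ℕ) (hpal : (h::t).reverse = h::t) :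
    levelsL (b :: ((h::t) ++ [b])) =
      levelsL (h::t) + ((if b = h then 1 else 0) + (if h = b then 1 else 0)) := by
  rw [levelsL_eq, levelsL_eq, cnt_wrap _ _ _ _ hpal]
  simp

lemma dropsL_wrap (b h : ℕ) (t : List ℕ) (hpal : (h::t).reverse = h::t) :
    dropsL (b :: ((h::t) ++ [b])) =
      dropsL (h::t) + ((if h < b then 1 else 0) + (if b < h then 1 else 0)) := by
  rw [dropsL_eq, dropsL_eq, cnt_wrap _ _ _ _ hpal]
  simp

lemma SF_struct {k : ℕ} {a : Fin k → ℕ} {i : Fin k} {m : Fin 5 →₀ ℕ} {c : Composition (m 0)}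
    (hc : c ∈ SF a i m) (hlen : 3 ≤ c.blocks.length) :
    ∃ h t, c.blocks = a i :: (((h :: t) : List ℕ) ++ [a i]) ∧ (h::t).reverse = h::t ∧
      (∀ p ∈ (h::t), ∃ j', a j' = p) ∧
      (h::t).sum + 2 * a i = m 0 ∧
      (h::t).length + 2 = m 1 ∧
      c.blocks.tail.head? = some h ∧
      risesL (h::t) + ((if a i < h then 1 else 0) + (if h < a i then 1 else 0)) = m 2 ∧
      levelsL (h::t) + ((if a i = h then 1 else 0) + (if h = a i then 1 else 0)) = m 3 ∧
      dropsL (h::t) + ((if h < a i then 1 else 0) + (if a i < h then 1 else 0)) = m 4 := by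
  obtain ⟨⟨hA, hpal, hlen1, hr, hl, hd⟩, hhead⟩ := mem_SF.mp hc
  obtain ⟨τ, hτ, hτpal⟩ := palin_decomp c.blocks (a i) hpal hhead (by omega)
  have hτne : τ ≠ [] := by
    intro h
    subst h
    rw [hτ] at hlen
    simp at hlen
  obtain ⟨h, t, rfl⟩ : ∃ h t, τ = h :: t := by
    cases τ with
    | nil => exact absurd rfl hτne
    | cons h t => exact ⟨h, t, rfl⟩
  refine ⟨h, t, hτ, hτpal, ?_, ?_, ?_, ?_, ?_, ?_, ?_⟩
  · intro p hp
    exact hA p (by rw [hτ]; exact List.mem_cons_of_mem _ (List.mem_append_left _ hp))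
  · have := c.blocks_sum
    rw [hτ] at this
    simp only [List.sum_cons, List.sum_append, List.sum_cons, List.sum_nil] at this ⊢
    omega
  · have hlb : c.blocks.length = m 1 := hlen1
    rw [hτ] at hlb
    simp only [List.length_cons, List.length_append, List.length_nil] at hlb ⊢
    omega
  · rw [hτ]
    simp
  · rw [← hr, hτ, risesL_wrap _ _ _ hτpal]
  · rw [← hl, hτ, levelsL_wrap _ _ _ hτpal]
  · rw [← hd, hτ, dropsL_wrap _ _ _ hτpal]
lemma stats_single (x : ℕ) : risesL [x] = 0 ∧ levelsL [x] = 0 ∧ dropsL [x] = 0 := by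
  refine ⟨rfl, rfl, rfl⟩

lemma stats_pair (x : ℕ) : risesL [x,x] = 0 ∧ levelsL [x,x] = 1 ∧ dropsL [x,x] = 0 := by
  refine ⟨?_, ?_, ?_⟩ <;> simp [risesL, levelsL, dropsL, List.countP_cons]

lemma card_q1 {k : ℕ} (a : Fin k → ℕ) (hpos : ∀ i, 0 < a i) (i : Fin k) (m : Fin 5 →₀ ℕ) :
    ((SF a i m).filter (fun c => c.blocks.length = 1)).card
      = if m = mS (a i) then 1 else 0 := by
  obtain ⟨e0, e1, e2, e3, e4⟩ := mS_apply (a i)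
  split_ifs with hm
  · subst hm
    rw [Finset.card_eq_one]
    refine ⟨⟨[a i], by intro p hp; simp at hp; subst hp; exact hpos i, by simp [e0]⟩, ?_⟩
    ext c
    simp only [Finset.mem_filter, Finset.mem_singleton]
    constructor
    · rintro ⟨hc, hlen⟩
      obtain ⟨⟨hA, hpal, hl1, hr, hl, hd⟩, hhead⟩ := mem_SF.mp hc
      apply comp_ext
      obtain ⟨x, t, hxt⟩ := List.exists_cons_of_ne_nil
        (by intro hnil; rw [hnil] at hhead; simp at hhead : c.blocks ≠ [])
      have ht : t = [] := by
        rw [hxt] at hlen; simpa using hlen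
      have hx : x = a i := by
        rw [hxt] at hhead; simpa using hhead
      rw [hxt, ht, hx]
    · rintro rfl
      refine ⟨mem_SF.mpr ⟨⟨?_, rfl, ?_, ?_, ?_, ?_⟩, rfl⟩, rfl⟩
      · intro p hp; simp at hp; exact ⟨i, hp.symm⟩
      · simpa [Composition.length] using e1.symm
      · simpa [(stats_single (a i)).1] using e2.symm
      · simpa [(stats_single (a i)).2.1] using e3.symm
      · simpa [(stats_single (a i)).2.2] using e4.symm
  · rw [Finset.card_eq_zero, Finset.filter_eq_empty_iff]
    intro c hc hlen
    obtain ⟨⟨hA, hpal, hl1, hr, hl, hd⟩, hhead⟩ := mem_SF.mp hc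
    obtain ⟨x, t, hxt⟩ := List.exists_cons_of_ne_nil
      (by intro hnil; rw [hnil] at hhead; simp at hhead : c.blocks ≠ [])
    have ht : t = [] := by rw [hxt] at hlen; simpa using hlen
    have hx : x = a i := by rw [hxt] at hhead; simpa using hhead
    have hb : c.blocks = [a i] := by rw [hxt, ht, hx]
    apply hm
    rw [eq_iff_coords]
    have hsum := c.blocks_sum
    rw [hb] at hsum
    have hlb : c.blocks.length = m 1 := hl1
    rw [hb] at hlb hr hl hd
    refine ⟨?_, ?_, ?_, ?_, ?_⟩
    · rw [e0]; simpa using hsum.symm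
    · rw [e1]; simpa using hlb.symm
    · rw [e2, ← hr, (stats_single (a i)).1]
    · rw [e3, ← hl, (stats_single (a i)).2.1]
    · rw [e4, ← hd, (stats_single (a i)).2.2]

lemma card_q2 {k : ℕ} (a : Fin k → ℕ) (hpos : ∀ i, 0 < a i) (i : Fin k) (m : Fin 5 →₀ ℕ) :
    ((SF a i m).filter (fun c => c.blocks.length = 2)).card
      = if m = mL (a i) then 1 else 0 := by
  obtain ⟨e0, e1, e2, e3, e4⟩ := mL_apply (a i)
  have key : ∀ c : Composition (m 0), c ∈ SF a i m → c.blocks.length = 2 →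
      c.blocks = [a i, a i] ∧ m 0 = 2 * a i ∧ m 1 = 2 ∧ m 2 = 0 ∧ m 3 = 1 ∧ m 4 = 0 := by
    intro c hc hlen
    obtain ⟨⟨hA, hpal, hl1, hr, hl, hd⟩, hhead⟩ := mem_SF.mp hc
    obtain ⟨x, t, hxt⟩ := List.exists_cons_of_ne_nil
      (by intro hnil; rw [hnil] at hhead; simp at hhead : c.blocks ≠ [])
    obtain ⟨y, t', hyt⟩ : ∃ y t', t = y :: t' := by
      cases t with
      | nil => rw [hxt] at hlen; simp at hlen
      | cons y t' => exact ⟨y, t', rfl⟩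
    have ht' : t' = [] := by
      rw [hxt, hyt] at hlen; simpa using hlen
    have hx : x = a i := by rw [hxt] at hhead; simpa using hhead
    have hy : y = a i := by
      rw [hxt, hyt, ht', hx] at hpal
      have := hpal.symm
      simp at this
      exact this.2
    have hb : c.blocks = [a i, a i] := by rw [hxt, hyt, ht', hx, hy]
    have hsum := c.blocks_sum
    rw [hb] at hsum
    have hlb : c.blocks.length = m 1 := hl1
    rw [hb] at hlb hr hl hd
    refine ⟨hb, by simp at hsum; omega, by simpa using hlb.symm, ?_, ?_, ?_⟩
    · rw [← hr, (stats_pair (a i)).1]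
    · rw [← hl, (stats_pair (a i)).2.1]
    · rw [← hd, (stats_pair (a i)).2.2]
  split_ifs with hm
  · subst hm
    rw [Finset.card_eq_one]
    refine ⟨⟨[a i, a i], by intro p hp; simp at hp; rcases hp with rfl | rfl <;> exact hpos i,
      by simp [e0]; ring⟩, ?_⟩
    ext c
    simp only [Finset.mem_filter, Finset.mem_singleton]
    constructor
    · rintro ⟨hc, hlen⟩
      exact comp_ext (key c hc hlen).1
    · rintro rfl
      refine ⟨mem_SF.mpr ⟨⟨?_, rfl, ?_, ?_, ?_, ?_⟩, rfl⟩, rfl⟩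
      · intro p hp; simp at hp; rcases hp with rfl | rfl <;> exact ⟨i, rfl⟩
      · simpa [Composition.length] using e1.symm
      · simpa [(stats_pair (a i)).1] using e2.symm
      · simpa [(stats_pair (a i)).2.1] using e3.symm
      · simpa [(stats_pair (a i)).2.2] using e4.symm
  · rw [Finset.card_eq_zero, Finset.filter_eq_empty_iff]
    intro c hc hlen
    obtain ⟨-, h0, h1, h2, h3, h4⟩ := key c hc hlen
    exact hm (by rw [eq_iff_coords]; omega)
lemma card_q3 {k : ℕ} (a : Fin k → ℕ) (hpos : ∀ i, 0 < a i) (i : Fin k) (m : Fin 5 →₀ ℕ) :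
    ((SF a i m).filter (fun c => 3 ≤ c.blocks.length ∧ c.blocks.tail.head? = some (a i))).card
      = if mLL (a i) ≤ m then (SF a i (m - mLL (a i))).card else 0 := by
  obtain ⟨e0, e1, e2, e3, e4⟩ := mLL_apply (a i)
  have s0 : (m - mLL (a i)) 0 = m 0 - 2 * a i := by rw [sub_apply5, e0]
  have s1 : (m - mLL (a i)) 1 = m 1 - 2 := by rw [sub_apply5, e1]
  have s2 : (m - mLL (a i)) 2 = m 2 := by rw [sub_apply5, e2]; omega
  have s3 : (m - mLL (a i)) 3 = m 3 - 2 := by rw [sub_apply5, e3]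
  have s4 : (m - mLL (a i)) 4 = m 4 := by rw [sub_apply5, e4]; omega
  split_ifs with hle
  · have hco := (le_iff_coords _ _).mp hle
    rw [e0, e1, e2, e3, e4] at hco
    obtain ⟨l0, l1, -, l3, -⟩ := hco
    have hsum : ∀ c' : Composition ((m - mLL (a i)) 0),
        (a i :: (c'.blocks ++ [a i])).sum = m 0 := by
      intro c'
      have hbs := c'.blocks_sum.trans s0
      simp only [List.sum_cons, List.sum_append, List.sum_cons, List.sum_nil]
      omega
    have hposl : ∀ c' : Composition ((m - mLL (a i)) 0),
        ∀ p ∈ (a i :: (c'.blocks ++ [a i])), 0 < p := by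
      intro c' p hp
      rw [List.mem_cons, List.mem_append, List.mem_singleton] at hp
      rcases hp with rfl | hp | rfl
      · exact hpos i
      · exact c'.blocks_pos hp
      · exact hpos i
    refine (Finset.card_bij
      (fun c' _ => (⟨a i :: (c'.blocks ++ [a i]), fun hp => hposl c' _ hp, hsum c'⟩ :
        Composition (m 0))) ?_ ?_ ?_).symm
    · -- maps into target
      intro c' hc'
      obtain ⟨⟨hA, hpal, hl1, hr, hl, hd⟩, hhead⟩ := mem_SF.mp hc'
      obtain ⟨h, t, hb⟩ : ∃ h t, c'.blocks = h :: t :=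
        List.exists_cons_of_ne_nil (by intro hnil; rw [hnil] at hhead; simp at hhead)
      have hha : h = a i := by rw [hb] at hhead; simpa using hhead
      subst hha
      have τpal : (a i :: t).reverse = a i :: t := by rw [hb] at hpal; exact hpal
      have hlb : c'.blocks.length = (m - mLL (a i)) 1 := hl1
      rw [hb] at hr hl hd hlb
      rw [Finset.mem_filter]
      refine ⟨mem_SF.mpr ⟨⟨?_, ?_, ?_, ?_, ?_, ?_⟩, rfl⟩, ?_, ?_⟩
      · intro p hp
        rw [List.mem_cons, List.mem_append, List.mem_singleton] at hp
        rcases hp with rfl | hp | rfl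
        · exact ⟨i, rfl⟩
        · exact hA p hp
        · exact ⟨i, rfl⟩
      · show (a i :: (c'.blocks ++ [a i])).reverse = a i :: (c'.blocks ++ [a i])
        rw [hb]
        exact (wrap_palin_iff _ _).mpr τpal
      · show (a i :: (c'.blocks ++ [a i])).length = m 1
        rw [hb]
        rw [s1] at hlb
        simp only [List.length_cons, List.length_append, List.length_nil] at hlb ⊢
        omega
      · show risesL (a i :: (c'.blocks ++ [a i])) = m 2
        rw [hb, risesL_wrap _ _ _ τpal, if_neg (lt_irrefl (a i))]
        rw [s2] at hr
        omega
      · show levelsL (a i :: (c'.blocks ++ [a i])) = m 3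
        rw [hb, levelsL_wrap _ _ _ τpal, if_pos rfl]
        rw [s3] at hl
        omega
      · show dropsL (a i :: (c'.blocks ++ [a i])) = m 4
        rw [hb, dropsL_wrap _ _ _ τpal, if_neg (lt_irrefl (a i))]
        rw [s4] at hd
        omega
      · show 3 ≤ (a i :: (c'.blocks ++ [a i])).length
        rw [hb]
        simp
      · show (a i :: (c'.blocks ++ [a i])).tail.head? = some (a i)
        rw [hb]
        simp
    · -- injective
      intro c₁ h₁ c₂ h₂ heq
      apply comp_ext
      have hbl := congrArg Composition.blocks heq
      simp only [] at hbl
      rw [List.cons.injEq] at hbl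
      exact List.append_cancel_right hbl.2
    · -- surjective
      intro c hc
      rw [Finset.mem_filter] at hc
      obtain ⟨hcS, hlen3, hsecond⟩ := hc
      obtain ⟨h, t, hb, τpal, hAτ, hsumτ, hlenτ, hsec', hrτ, hlτ, hdτ⟩ := SF_struct hcS hlen3
      have hha : h = a i := by rw [hsec'] at hsecond; simpa using hsecond
      subst hha
      rw [if_neg (lt_irrefl (a i))] at hrτ hdτ
      rw [if_pos rfl] at hlτ
      refine ⟨⟨a i :: t, ?_, ?_⟩, mem_SF.mpr ⟨⟨hAτ, τpal, ?_, ?_, ?_, ?_⟩, rfl⟩, ?_⟩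
      · intro p hp
        apply c.blocks_pos
        rw [hb]
        exact List.mem_cons_of_mem _ (List.mem_append_left _ hp)
      · rw [s0]; omega
      · show (a i :: t).length = (m - mLL (a i)) 1
        rw [s1]; omega
      · show risesL (a i :: t) = (m - mLL (a i)) 2
        rw [s2]; omega
      · show levelsL (a i :: t) = (m - mLL (a i)) 3
        rw [s3]; omega
      · show dropsL (a i :: t) = (m - mLL (a i)) 4
        rw [s4]; omega
      · exact comp_ext hb.symm
  · rw [Finset.card_eq_zero, Finset.filter_eq_empty_iff]
    intro c hc hcond
    obtain ⟨hlen3, hsecond⟩ := hcond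
    obtain ⟨h, t, hb, τpal, hAτ, hsumτ, hlenτ, hsec', hrτ, hlτ, hdτ⟩ := SF_struct hc hlen3
    have hha : h = a i := by rw [hsec'] at hsecond; simpa using hsecond
    subst hha
    rw [if_neg (lt_irrefl (a i))] at hrτ hdτ
    rw [if_pos rfl] at hlτ
    apply hle
    rw [le_iff_coords, e0, e1, e2, e3, e4]
    exact ⟨by omega, by omega, by omega, by omega, by omega⟩

noncomputable def UF {k : ℕ} (a : Fin k → ℕ) (i : Fin k) (m : Fin 5 →₀ ℕ) :
    Finset (Composition (m 0)) :=
  Finset.univ.filter (fun c => ((∀ p ∈ c.blocks, ∃ j', a j' = p) ∧ c.blocks.reverse = c.blocks ∧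
      c.length = m 1 ∧ risesL c.blocks = m 2 ∧ levelsL c.blocks = m 3 ∧ dropsL c.blocks = m 4) ∧
      ∃ j ∈ Finset.univ.filter (· ≠ i), c.blocks.head? = some (a j))

lemma mem_UF {k : ℕ} {a : Fin k → ℕ} {i : Fin k} {m : Fin 5 →₀ ℕ} {c : Composition (m 0)} :
    c ∈ UF a i m ↔ ((∀ p ∈ c.blocks, ∃ j', a j' = p) ∧ c.blocks.reverse = c.blocks ∧
      c.length = m 1 ∧ risesL c.blocks = m 2 ∧ levelsL c.blocks = m 3 ∧ dropsL c.blocks = m 4) ∧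
      ∃ j, j ≠ i ∧ c.blocks.head? = some (a j) := by
  simp only [UF, Finset.mem_filter, Finset.mem_univ, true_and]

lemma card_UF {k : ℕ} (a : Fin k → ℕ) (hinj : Function.Injective a) (i : Fin k)
    (m : Fin 5 →₀ ℕ) :
    (UF a i m).card = ∑ j ∈ Finset.univ.filter (· ≠ i), (SF a j m).card := by
  rw [← Finset.card_biUnion]
  · congr 1
    ext c
    simp only [UF, SF, Finset.mem_biUnion, Finset.mem_filter, Finset.mem_univ, true_and]
    tauto
  · intro x _ y _ hxy
    simp only [SF, Finset.disjoint_left, Finset.mem_filter, Finset.mem_univ, true_and]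
    rintro c ⟨-, hcx⟩ ⟨-, hcy⟩
    apply hxy
    apply hinj
    rw [hcx] at hcy
    exact Option.some_injective _ hcy

lemma card_q4 {k : ℕ} (a : Fin k → ℕ) (hinj : Function.Injective a) (hpos : ∀ i, 0 < a i)
    (i : Fin k) (m : Fin 5 →₀ ℕ) :
    ((SF a i m).filter (fun c => 3 ≤ c.blocks.length ∧ c.blocks.tail.head? ≠ some (a i))).card
      = if mDR (a i) ≤ m then (UF a i (m - mDR (a i))).card else 0 := by
  obtain ⟨e0, e1, e2, e3, e4⟩ := mDR_apply (a i)
  have s0 : (m - mDR (a i)) 0 = m 0 - 2 * a i := by rw [sub_apply5, e0]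
  have s1 : (m - mDR (a i)) 1 = m 1 - 2 := by rw [sub_apply5, e1]
  have s2 : (m - mDR (a i)) 2 = m 2 - 1 := by rw [sub_apply5, e2]
  have s3 : (m - mDR (a i)) 3 = m 3 := by rw [sub_apply5, e3]; omega
  have s4 : (m - mDR (a i)) 4 = m 4 - 1 := by rw [sub_apply5, e4]
  split_ifs with hle
  · have hco := (le_iff_coords _ _).mp hle
    rw [e0, e1, e2, e3, e4] at hco
    obtain ⟨l0, l1, l2, -, l4⟩ := hco
    have hsum : ∀ c' : Composition ((m - mDR (a i)) 0),
        (a i :: (c'.blocks ++ [a i])).sum = m 0 := by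
      intro c'
      have hbs := c'.blocks_sum.trans s0
      simp only [List.sum_cons, List.sum_append, List.sum_cons, List.sum_nil]
      omega
    have hposl : ∀ c' : Composition ((m - mDR (a i)) 0),
        ∀ p ∈ (a i :: (c'.blocks ++ [a i])), 0 < p := by
      intro c' p hp
      rw [List.mem_cons, List.mem_append, List.mem_singleton] at hp
      rcases hp with rfl | hp | rfl
      · exact hpos i
      · exact c'.blocks_pos hp
      · exact hpos i
    refine (Finset.card_bij
      (fun c' _ => (⟨a i :: (c'.blocks ++ [a i]), fun hp => hposl c' _ hp, hsum c'⟩ :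
        Composition (m 0))) ?_ ?_ ?_).symm
    · -- maps into target
      intro c' hc'
      obtain ⟨⟨hA, hpal, hl1, hr, hl, hd⟩, j, hji, hhead⟩ := mem_UF.mp hc'
      obtain ⟨h, t, hb⟩ : ∃ h t, c'.blocks = h :: t :=
        List.exists_cons_of_ne_nil (by intro hnil; rw [hnil] at hhead; simp at hhead)
      have hha : h = a j := by rw [hb] at hhead; simpa using hhead
      have hne : h ≠ a i := by
        intro hcontra
        exact hji (hinj (by rw [← hha, hcontra]))
      have τpal : (h :: t).reverse = h :: t := by rw [hb] at hpal; exact hpal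
      have hlb : c'.blocks.length = (m - mDR (a i)) 1 := hl1
      rw [hb] at hr hl hd hlb
      have hrise1 : ((if a i < h then 1 else 0) + (if h < a i then 1 else 0)) = 1 := by
        rcases lt_trichotomy (a i) h with h1 | h1 | h1
        · simp [h1]; omega
        · exact absurd h1.symm hne
        · simp [h1]; omega
      have hne' : a i ≠ h := Ne.symm hne
      have hlev0 : ((if a i = h then 1 else 0) + (if h = a i then 1 else 0)) = 0 := by
        simp [hne, hne']
      rw [Finset.mem_filter]
      refine ⟨mem_SF.mpr ⟨⟨?_, ?_, ?_, ?_, ?_, ?_⟩, rfl⟩, ?_, ?_⟩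
      · intro p hp
        rw [List.mem_cons, List.mem_append, List.mem_singleton] at hp
        rcases hp with rfl | hp | rfl
        · exact ⟨i, rfl⟩
        · exact hA p hp
        · exact ⟨i, rfl⟩
      · show (a i :: (c'.blocks ++ [a i])).reverse = a i :: (c'.blocks ++ [a i])
        rw [hb]
        exact (wrap_palin_iff _ _).mpr τpal
      · show (a i :: (c'.blocks ++ [a i])).length = m 1
        rw [hb]
        rw [s1] at hlb
        simp only [List.length_cons, List.length_append, List.length_cons,
          List.length_nil] at hlb ⊢
        omega
      · show risesL (a i :: (c'.blocks ++ [a i])) = m 2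
        rw [hb, risesL_wrap _ _ _ τpal, hrise1]
        rw [s2] at hr
        omega
      · show levelsL (a i :: (c'.blocks ++ [a i])) = m 3
        rw [hb, levelsL_wrap _ _ _ τpal, hlev0]
        rw [s3] at hl
        omega
      · show dropsL (a i :: (c'.blocks ++ [a i])) = m 4
        rw [hb, dropsL_wrap _ _ _ τpal]
        rw [s4] at hd
        have : ((if h < a i then 1 else 0) + (if a i < h then 1 else 0)) = 1 := by omega
        omega
      · show 3 ≤ (a i :: (c'.blocks ++ [a i])).length
        rw [hb]
        simp
      · show (a i :: (c'.blocks ++ [a i])).tail.head? ≠ some (a i)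
        rw [hb]
        simp [hne]
    · -- injective
      intro c₁ h₁ c₂ h₂ heq
      apply comp_ext
      have hbl := congrArg Composition.blocks heq
      simp only [] at hbl
      rw [List.cons.injEq] at hbl
      exact List.append_cancel_right hbl.2
    · -- surjective
      intro c hc
      rw [Finset.mem_filter] at hc
      obtain ⟨hcS, hlen3, hsecond⟩ := hc
      obtain ⟨h, t, hb, τpal, hAτ, hsumτ, hlenτ, hsec', hrτ, hlτ, hdτ⟩ := SF_struct hcS hlen3
      have hne : h ≠ a i := by
        intro hcontra
        apply hsecond
        rw [hsec', hcontra]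
      have hrise1 : ((if a i < h then 1 else 0) + (if h < a i then 1 else 0)) = 1 := by
        rcases lt_trichotomy (a i) h with h1 | h1 | h1
        · simp [h1]; omega
        · exact absurd h1.symm hne
        · simp [h1]; omega
      have hne' : a i ≠ h := Ne.symm hne
      have hlev0 : ((if a i = h then 1 else 0) + (if h = a i then 1 else 0)) = 0 := by
        simp [hne, hne']
      have hdrop1 : ((if h < a i then 1 else 0) + (if a i < h then 1 else 0)) = 1 := by omega
      rw [hrise1] at hrτ
      rw [hlev0] at hlτ
      rw [hdrop1] at hdτ
      obtain ⟨j, hj⟩ := hAτ h List.mem_cons_self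
      have hji : j ≠ i := by
        intro hcontra
        apply hne
        rw [← hj, hcontra]
      refine ⟨⟨h :: t, ?_, ?_⟩, mem_UF.mpr ⟨⟨hAτ, τpal, ?_, ?_, ?_, ?_⟩, j, hji, ?_⟩, ?_⟩
      · intro p hp
        apply c.blocks_pos
        rw [hb]
        exact List.mem_cons_of_mem _ (List.mem_append_left _ hp)
      · rw [s0]; omega
      · show (h :: t).length = (m - mDR (a i)) 1
        rw [s1]; omega
      · show risesL (h :: t) = (m - mDR (a i)) 2
        rw [s2]; omega
      · show levelsL (h :: t) = (m - mDR (a i)) 3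
        rw [s3]; omega
      · show dropsL (h :: t) = (m - mDR (a i)) 4
        rw [s4]; omega
      · show (h :: t).head? = some (a j)
        rw [List.head?_cons, hj]
      · exact comp_ext hb.symm
  · rw [Finset.card_eq_zero, Finset.filter_eq_empty_iff]
    intro c hc hcond
    obtain ⟨hlen3, hsecond⟩ := hcond
    obtain ⟨h, t, hb, τpal, hAτ, hsumτ, hlenτ, hsec', hrτ, hlτ, hdτ⟩ := SF_struct hc hlen3
    have hne : h ≠ a i := by
      intro hcontra
      apply hsecond
      rw [hsec', hcontra]
    have hrise1 : ((if a i < h then 1 else 0) + (if h < a i then 1 else 0)) = 1 := by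
      rcases lt_trichotomy (a i) h with h1 | h1 | h1
      · simp [h1]; omega
      · exact absurd h1.symm hne
      · simp [h1]; omega
    have hdrop1 : ((if h < a i then 1 else 0) + (if a i < h then 1 else 0)) = 1 := by omega
    rw [hrise1] at hrτ
    rw [hdrop1] at hdτ
    apply hle
    rw [le_iff_coords, e0, e1, e2, e3, e4]
    exact ⟨by omega, by omega, by omega, by omega, by omega⟩
lemma card_SF_split {k : ℕ} (a : Fin k → ℕ) (hinj : Function.Injective a)
    (hpos : ∀ i, 0 < a i) (i : Fin k) (m : Fin 5 →₀ ℕ) :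
    (SF a i m).card
      = ((if m = mS (a i) then 1 else 0) + (if m = mL (a i) then 1 else 0)
        + (if mLL (a i) ≤ m then (SF a i (m - mLL (a i))).card else 0)
        + (if mDR (a i) ≤ m then
            ∑ j ∈ Finset.univ.filter (· ≠ i), (SF a j (m - mDR (a i))).card else 0)) := by
  have hlenpos : ∀ c : Composition (m 0), c ∈ SF a i m → 1 ≤ c.blocks.length := by
    intro c hc
    obtain ⟨-, hhead⟩ := mem_SF.mp hc
    cases hbb : c.blocks with
    | nil => rw [hbb] at hhead; simp at hhead
    | cons x t => simp
  have hsplit1 := Finset.card_filter_add_card_filter_not (s := SF a i m)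
    (p := fun c => c.blocks.length = 1)
  have hsplit2 := Finset.card_filter_add_card_filter_not
    (s := (SF a i m).filter (fun c => ¬c.blocks.length = 1))
    (p := fun c => c.blocks.length = 2)
  have hsplit3 := Finset.card_filter_add_card_filter_not
    (s := ((SF a i m).filter (fun c => ¬c.blocks.length = 1)).filter
      (fun c => ¬c.blocks.length = 2))
    (p := fun c => c.blocks.tail.head? = some (a i))
  beta_reduce at hsplit1 hsplit2 hsplit3
  have E2 : ((SF a i m).filter (fun c => ¬c.blocks.length = 1)).filter
      (fun c => c.blocks.length = 2) = (SF a i m).filter (fun c => c.blocks.length = 2) := by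
    ext c
    simp only [Finset.mem_filter]
    constructor
    · rintro ⟨⟨hS, -⟩, h2⟩; exact ⟨hS, h2⟩
    · rintro ⟨hS, h2⟩; exact ⟨⟨hS, by omega⟩, h2⟩
  have E3 : (((SF a i m).filter (fun c => ¬c.blocks.length = 1)).filter
      (fun c => ¬c.blocks.length = 2)).filter (fun c => c.blocks.tail.head? = some (a i))
      = (SF a i m).filter
        (fun c => 3 ≤ c.blocks.length ∧ c.blocks.tail.head? = some (a i)) := by
    ext c
    simp only [Finset.mem_filter]
    constructor
    · rintro ⟨⟨⟨hS, h1⟩, h2⟩, h3⟩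
      exact ⟨hS, by have := hlenpos c hS; omega, h3⟩
    · rintro ⟨hS, h1, h3⟩
      exact ⟨⟨⟨hS, by omega⟩, by omega⟩, h3⟩
  have E4 : (((SF a i m).filter (fun c => ¬c.blocks.length = 1)).filter
      (fun c => ¬c.blocks.length = 2)).filter (fun c => ¬c.blocks.tail.head? = some (a i))
      = (SF a i m).filter
        (fun c => 3 ≤ c.blocks.length ∧ c.blocks.tail.head? ≠ some (a i)) := by
    ext c
    simp only [Finset.mem_filter]
    constructor
    · rintro ⟨⟨⟨hS, h1⟩, h2⟩, h3⟩
      exact ⟨hS, by have := hlenpos c hS; omega, h3⟩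
    · rintro ⟨hS, h1, h3⟩
      exact ⟨⟨⟨hS, by omega⟩, by omega⟩, h3⟩
  have e2 := congrArg Finset.card E2
  have e3 := congrArg Finset.card E3
  have e4 := congrArg Finset.card E4
  have q1 := card_q1 a hpos i m
  have q2 := card_q2 a hpos i m
  have q3 := card_q3 a hpos i m
  have q4 := card_q4 a hinj hpos i m
  rw [card_UF a hinj] at q4
  omega
lemma step2 {k : ℕ} (a : Fin k → ℕ) (hinj : Function.Injective a)
    (hpos : ∀ i, 0 < a i) (i : Fin k) :
    PP a i = (MvPowerSeries.monomial (mS (a i))) 1 + (MvPowerSeries.monomial (mL (a i))) 1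
      + (MvPowerSeries.monomial (mLL (a i))) 1 * PP a i
      + (MvPowerSeries.monomial (mDR (a i))) 1 *
          (∑ j ∈ Finset.univ.filter (· ≠ i), PP a j) := by
  apply MvPowerSeries.ext
  intro m
  rw [map_add, map_add, map_add, MvPowerSeries.coeff_monomial, MvPowerSeries.coeff_monomial,
    MvPowerSeries.coeff_monomial_mul, MvPowerSeries.coeff_monomial_mul]
  have h1 : MvPowerSeries.coeff m (PP a i) = ((SF a i m).card : ℤ) := rfl
  have h2 : MvPowerSeries.coeff (m - mLL (a i)) (PP a i)
      = ((SF a i (m - mLL (a i))).card : ℤ) := rfl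
  have h3 : ∀ j : Fin k, MvPowerSeries.coeff (m - mDR (a i)) (PP a j)
      = ((SF a j (m - mDR (a i))).card : ℤ) := fun _ => rfl
  rw [h1, h2, map_sum]
  simp only [h3, one_mul]
  have key := card_SF_split a hinj hpos i m
  have keyZ := congrArg (Nat.cast : ℕ → ℤ) key
  push_cast at keyZ
  exact keyZ

/-- generic algebraic assembly -/
lemma algebra_main {R : Type*} [CommRing R] {k : ℕ} (P : R) (p D E F : Fin k → R)
    (hP : P = 1 + ∑ i, p i)
    (hrec : ∀ i, D i * p i = E i + F i * P) :
    P * ((∏ i, D i) - ∑ i, F i * ∏ j ∈ Finset.univ.filter (· ≠ i), D j)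
      = (∏ i, D i) + ∑ i, E i * ∏ j ∈ Finset.univ.filter (· ≠ i), D j := by
  have hprod : ∀ i : Fin k, D i * ∏ j ∈ Finset.univ.filter (· ≠ i), D j = ∏ j, D j := by
    intro i
    rw [Finset.filter_ne']
    exact Finset.mul_prod_erase _ _ (Finset.mem_univ i)
  have expand : P * ∏ i, D i
      = (∏ i, D i) + ∑ i, (D i * p i) * ∏ j ∈ Finset.univ.filter (· ≠ i), D j := by
    conv_lhs => rw [hP]
    rw [add_mul, one_mul, Finset.sum_mul]
    congr 1
    refine Finset.sum_congr rfl fun i _ => ?_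
    rw [← hprod i]
    ring
  have step : P * ∑ i, F i * ∏ j ∈ Finset.univ.filter (· ≠ i), D j
      = ∑ i, (F i * P) * ∏ j ∈ Finset.univ.filter (· ≠ i), D j := by
    rw [Finset.mul_sum]
    exact Finset.sum_congr rfl fun i _ => by ring
  rw [mul_sub, step, expand, add_sub_assoc, ← Finset.sum_sub_distrib]
  congr 1
  refine Finset.sum_congr rfl fun i _ => ?_
  rw [hrec i]
  ring
lemma hrec_main {k : ℕ} (a : Fin k → ℕ) (hinj : Function.Injective a)
    (hpos : ∀ i, 0 < a i) (i : Fin k) :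
    DD a i * PP a i
      = ((MvPowerSeries.X 0 : MvPowerSeries (Fin 5) ℤ) ^ (a i) * MvPowerSeries.X 1
          + (MvPowerSeries.X 0) ^ (2 * a i) * (MvPowerSeries.X 1) ^ 2
            * (MvPowerSeries.X 3 - MvPowerSeries.X 4 * MvPowerSeries.X 2))
        + ((MvPowerSeries.X 0) ^ (2 * a i) * (MvPowerSeries.X 1) ^ 2
            * (MvPowerSeries.X 4 * MvPowerSeries.X 2)) * PA a := by
  have hMS : (MvPowerSeries.X 0 : MvPowerSeries (Fin 5) ℤ) ^ (a i) * MvPowerSeries.X 1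
      = (MvPowerSeries.monomial (mS (a i))) 1 := by
    rw [MvPowerSeries.X_pow_eq, MvPowerSeries.X_def, MvPowerSeries.monomial_mul_monomial,
      one_mul]
    rfl
  have hML : (MvPowerSeries.X 0 : MvPowerSeries (Fin 5) ℤ) ^ (2 * a i)
      * (MvPowerSeries.X 1) ^ 2 * MvPowerSeries.X 3
      = (MvPowerSeries.monomial (mL (a i))) 1 := by
    rw [MvPowerSeries.X_pow_eq, MvPowerSeries.X_pow_eq, MvPowerSeries.X_def,
      MvPowerSeries.monomial_mul_monomial, MvPowerSeries.monomial_mul_monomial, one_mul, one_mul]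
    rfl
  have hMLL : (MvPowerSeries.X 0 : MvPowerSeries (Fin 5) ℤ) ^ (2 * a i)
      * (MvPowerSeries.X 1) ^ 2 * (MvPowerSeries.X 3) ^ 2
      = (MvPowerSeries.monomial (mLL (a i))) 1 := by
    rw [MvPowerSeries.X_pow_eq, MvPowerSeries.X_pow_eq, MvPowerSeries.X_pow_eq,
      MvPowerSeries.monomial_mul_monomial, MvPowerSeries.monomial_mul_monomial, one_mul, one_mul]
    rfl
  have hMDR : (MvPowerSeries.X 0 : MvPowerSeries (Fin 5) ℤ) ^ (2 * a i)
      * (MvPowerSeries.X 1) ^ 2 * MvPowerSeries.X 2 * MvPowerSeries.X 4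
      = (MvPowerSeries.monomial (mDR (a i))) 1 := by
    rw [MvPowerSeries.X_pow_eq, MvPowerSeries.X_pow_eq, MvPowerSeries.X_def,
      MvPowerSeries.X_def, MvPowerSeries.monomial_mul_monomial,
      MvPowerSeries.monomial_mul_monomial, MvPowerSeries.monomial_mul_monomial,
      one_mul, one_mul, one_mul]
    rfl
  have hSig : ∑ j ∈ Finset.univ.filter (· ≠ i), PP a j = PA a - 1 - PP a i := by
    rw [Finset.filter_ne']
    have hsum := Finset.sum_erase_add Finset.univ (fun j => PP a j) (Finset.mem_univ i)
    have h1 := step1 a hinj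
    linear_combination hsum - h1
  have t2 := step2 a hinj hpos i
  rw [hSig, ← hMS, ← hML, ← hMLL, ← hMDR] at t2
  unfold DD
  linear_combination t2

theorem stmt2 {k : ℕ} (hk : 1 ≤ k) (a : Fin k → ℕ) (hpos : ∀ i, 0 < a i)
    (hmono : StrictMono a) :
    PA a * ((∏ i : Fin k, DD a i)
        - MvPowerSeries.X 4 * MvPowerSeries.X 2 * ∑ i : Fin k,
            (MvPowerSeries.X 0) ^ (2 * a i) * (MvPowerSeries.X 1) ^ 2
            * (∏ j ∈ Finset.univ.filter (· ≠ i), DD a j))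
    = (∏ i : Fin k, DD a i)
      + ∑ i : Fin k,
          ((MvPowerSeries.X 0) ^ (a i) * MvPowerSeries.X 1
            + (MvPowerSeries.X 0) ^ (2 * a i) * (MvPowerSeries.X 1) ^ 2
              * (MvPowerSeries.X 3 - MvPowerSeries.X 4 * MvPowerSeries.X 2))
          * (∏ j ∈ Finset.univ.filter (· ≠ i), DD a j) := by
  have hinj : Function.Injective a := hmono.injective
  have main := algebra_main (PA a) (PP a) (DD a)
    (fun i => (MvPowerSeries.X 0 : MvPowerSeries (Fin 5) ℤ) ^ (a i) * MvPowerSeries.X 1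
      + (MvPowerSeries.X 0) ^ (2 * a i) * (MvPowerSeries.X 1) ^ 2
        * (MvPowerSeries.X 3 - MvPowerSeries.X 4 * MvPowerSeries.X 2))
    (fun i => (MvPowerSeries.X 0 : MvPowerSeries (Fin 5) ℤ) ^ (2 * a i)
      * (MvPowerSeries.X 1) ^ 2 * (MvPowerSeries.X 4 * MvPowerSeries.X 2))
    (step1 a hinj) (fun i => hrec_main a hinj hpos i)
  have hF : MvPowerSeries.X 4 * MvPowerSeries.X 2 * ∑ i : Fin k,
        (MvPowerSeries.X 0 : MvPowerSeries (Fin 5) ℤ) ^ (2 * a i) * (MvPowerSeries.X 1) ^ 2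
          * (∏ j ∈ Finset.univ.filter (· ≠ i), DD a j)
      = ∑ i : Fin k, ((MvPowerSeries.X 0 : MvPowerSeries (Fin 5) ℤ) ^ (2 * a i)
          * (MvPowerSeries.X 1) ^ 2 * (MvPowerSeries.X 4 * MvPowerSeries.X 2))
          * (∏ j ∈ Finset.univ.filter (· ≠ i), DD a j) := by
    rw [Finset.mul_sum]
    exact Finset.sum_congr rfl fun i _ => by ring
  rw [hF]
  exact main
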